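/- Let K be a simplicial complex on vertex set ⊆ [m], σ ∈ K and ω ⊆ [m] with σ ∩ ω = ∅. Then for every η ⊆ ω: ω\η ∉ K_{σ,ω} if and only if [m]\(σ ∪ (ω\η)) ∈ K*, where K_{σ,ω} = { ω ∩ τ : τ ∈ K, τ ∩ σ = ∅, τ ∪ σ ∈ K } and K* is the Alexander dual of K relative to [m]. -/

import Mathlib

/-- A simplicial complex on vertex set contained in `[m] = Fin m`. -/
def IsSimplicialComplex {m : ℕ} (K : Set (Finset (Fin m))) : Prop :=
  ∀ σ ∈ K, ∀ τ ⊆ σ, τ ∈ K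

/-- `link_K(σ) = { τ ∈ K : τ ∩ σ = ∅, τ ∪ σ ∈ K }`. -/
def link {m : ℕ} (K : Set (Finset (Fin m))) (σ : Finset (Fin m)) : Set (Finset (Fin m)) :=
  {τ | τ ∈ K ∧ τ ∩ σ = ∅ ∧ τ ∪ σ ∈ K}

/-- `K_{σ,ω} = { ω ∩ τ : τ ∈ link_K(σ) }`. -/
def linkRestrict {m : ℕ} (K : Set (Finset (Fin m))) (σ ω : Finset (Fin m)) :
    Set (Finset (Fin m)) :=
  {ρ | ∃ τ ∈ link K σ, ρ = ω ∩ τ}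

/-- The Alexander dual of `K` relative to `[m]`. -/
def alexanderDual {m : ℕ} (K : Set (Finset (Fin m))) : Set (Finset (Fin m)) :=
  {τ | τᶜ ∉ K}

section

variable {m : ℕ} {K : Set (Finset (Fin m))} {σ ω ρ : Finset (Fin m)}

theorem IsSimplicialComplex.union_mem_of_mem_linkRestrict (hK : IsSimplicialComplex K)
    (hρ : ρ ∈ linkRestrict K σ ω) : σ ∪ ρ ∈ K := by
  obtain ⟨τ, ⟨-, -, hτσ⟩, rfl⟩ := hρ
  exact hK _ hτσ _ (by rw [Finset.union_comm τ]; gcongr; exact Finset.inter_subset_right)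

theorem IsSimplicialComplex.mem_linkRestrict_of_union_mem (hK : IsSimplicialComplex K)
    (hρω : ρ ⊆ ω) (hσρ : Disjoint σ ρ) (hσρK : σ ∪ ρ ∈ K) : ρ ∈ linkRestrict K σ ω :=
  ⟨ρ, ⟨hK _ hσρK _ Finset.subset_union_right, Finset.disjoint_iff_inter_eq_empty.mp hσρ.symm,
    by rwa [Finset.union_comm]⟩, (Finset.inter_eq_right.mpr hρω).symm⟩

theorem IsSimplicialComplex.mem_linkRestrict_iff (hK : IsSimplicialComplex K) (hρω : ρ ⊆ ω)
    (hσρ : Disjoint σ ρ) : ρ ∈ linkRestrict K σ ω ↔ σ ∪ ρ ∈ K :=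
  ⟨hK.union_mem_of_mem_linkRestrict, hK.mem_linkRestrict_of_union_mem hρω hσρ⟩

theorem compl_mem_alexanderDual_iff : σᶜ ∈ alexanderDual K ↔ σ ∉ K := by
  rw [alexanderDual, Set.mem_ofPred_eq, compl_compl]

end

theorem not_mem_linkRestrict_iff_general {m : ℕ} (K : Set (Finset (Fin m)))
    (hK : IsSimplicialComplex K) (σ ω : Finset (Fin m))
    (hσω : σ ∩ ω = ∅) (η : Finset (Fin m)) :
    ω \ η ∉ linkRestrict K σ ω ↔ (σ ∪ (ω \ η))ᶜ ∈ alexanderDual K := by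
  have hdisj : Disjoint σ (ω \ η) :=
    (Finset.disjoint_iff_inter_eq_empty.mpr hσω).mono_right Finset.sdiff_subset
  rw [compl_mem_alexanderDual_iff, hK.mem_linkRestrict_iff Finset.sdiff_subset hdisj]

/-- for every `η ⊆ ω`, `ω\η ∉ K_{σ,ω}` iff `[m]\(σ ∪ (ω\η)) ∈ K*`. -/
theorem not_mem_linkRestrict_iff {m : ℕ} (K : Set (Finset (Fin m)))
    (hK : IsSimplicialComplex K) (σ ω : Finset (Fin m)) (hσ : σ ∈ K)
    (hσω : σ ∩ ω = ∅) (η : Finset (Fin m)) (hη : η ⊆ ω) :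
    ω \ η ∉ linkRestrict K σ ω ↔ (σ ∪ (ω \ η))ᶜ ∈ alexanderDual K :=
  not_mem_linkRestrict_iff_general K hK σ ω hσω η
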